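/- Let D be a tournament missing disjoint paths of length 2 and let C = a_1b_1c_1, …, a_kb_kc_k be a double cycle in Δ(D). For all t ∈ {1,…,k} and i ∈ {1,…,k} with i ≠ t, with all neighborhoods taken in the induced subdigraph D[K(C)]: (1) the following are equivalent: a_i ∈ N⁺(a_t) ∪ N⁺(c_t) ∪ N⁻(b_t); c_i ∈ N⁺(a_t) ∪ N⁺(c_t) ∪ N⁻(b_t); {a_i, c_i} ⊆ N⁺(a_t) ∩ N⁺(c_t) ∩ N⁻(b_t); b_i ∈ N⁻(a_t) ∪ N⁻(c_t) ∪ N⁺(b_t); b_i ∈ N⁻(a_t) ∩ N⁻(c_t) ∩ N⁺(b_t). (2) the following are equivalent: a_i ∈ N⁻(a_t) ∪ N⁻(c_t) ∪ N⁺(b_t); c_i ∈ N⁻(a_t) ∪ N⁻(c_t) ∪ N⁺(b_t); {a_i, c_i} ⊆ N⁻(a_t) ∩ N⁻(c_t) ∩ N⁺(b_t); b_i ∈ N⁺(a_t) ∪ N⁺(c_t) ∪ N⁻(b_t); b_i ∈ N⁺(a_t) ∩ N⁺(c_t) ∩ N⁻(b_t). -/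

import Mathlib

/-!
Since the missing graph consists of the paths `aᵢbᵢcᵢ` themselves, any two vertices of
different paths are joined by an arc. For consecutive paths `P`, `X` the four losing relations
force a parity `s`: `X` beats `P` at every pair of positions whose roles (end or middle) differ
exactly when `s` holds, and at the same pairs there is no 2-path from `P` to `X`. Composing,
if `M` beats `T` with parity `s` and there is no 2-path from `M` to the next path `X` at
the pairs of parity `s'`, then `X` beats `T` with parity `s xor s'`: an arc from `T` to `X` would close a forbidden
2-path through `T`. Walking around the cycle from `t` to `i` and from `i` to `t` shows that
`i` beats `t` with some parity `s` and `t` beats `i` with parity `!s`, which fixes all nine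
arcs between the two paths; the equivalences are read off from them.
-/

namespace SSNC

variable {V : Type*}

/-- The arc relation of an oriented graph: no digons (hence irreflexive). -/
def Oriented (A : V → V → Prop) : Prop := ∀ u v, A u v → ¬ A v u

/-- `u ∈ N⁺⁺(v)`: the second out-neighborhood. -/
def SecondOut (A : V → V → Prop) (v u : V) : Prop :=
  u ≠ v ∧ ¬ A v u ∧ ∃ w, A v w ∧ A w u

/-- `{u, v}` is a missing edge of the digraph. -/
def IsMissing (A : V → V → Prop) (u v : V) : Prop :=
  u ≠ v ∧ ¬ A u v ∧ ¬ A v u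

/-- The losing relation for a fixed labeling of the two pairs: `a→x`, `b→y`,
`y ∉ N⁺(a) ∪ N⁺⁺(a)` and `x ∉ N⁺(b) ∪ N⁺⁺(b)`. -/
def LosesOrd (A : V → V → Prop) (a b x y : V) : Prop :=
  A a x ∧ A b y ∧ ¬ A a y ∧ ¬ SecondOut A a y ∧ ¬ A b x ∧ ¬ SecondOut A b x

/-- The missing edge `{a,b}` loses to the missing edge `{x,y}` (for some labeling). -/
def Loses (A : V → V → Prop) (a b x y : V) : Prop :=
  LosesOrd A a b x y ∨ LosesOrd A a b y x

/-- Degree of a vertex in the missing graph. -/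
noncomputable def mdeg (A : V → V → Prop) (v : V) : ℕ :=
  ({w | IsMissing A v w} : Set V).ncard

/-- The missing graph, as a simple graph. -/
def missingGraph (A : V → V → Prop) : SimpleGraph V where
  Adj u v := IsMissing A u v
  symm := by
    constructor
    rintro u v ⟨h1, h2, h3⟩
    exact ⟨h1.symm, h3, h2⟩
  loopless := by
    constructor
    rintro v ⟨h1, -, -⟩
    exact h1 rfl

/-- The missing graph is a vertex-disjoint union of paths
(equivalently: acyclic with maximum degree at most 2). -/
def MissingDisjointPaths (A : V → V → Prop) : Prop :=
  (missingGraph A).IsAcyclic ∧ ∀ v, mdeg A v ≤ 2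

/-- The missing graph is a vertex-disjoint union of paths on exactly 3 vertices
(equivalently: every missing edge has one endpoint of missing-degree 1 and one of
missing-degree 2). -/
def MissingPaths2 (A : V → V → Prop) : Prop :=
  ∀ u v, IsMissing A u v →
    (mdeg A u = 1 ∧ mdeg A v = 2) ∨ (mdeg A u = 2 ∧ mdeg A v = 1)

/-- The missing graph is a vertex-disjoint union of paths on 2 or 3 vertices. -/
def MissingPathsLe2 (A : V → V → Prop) : Prop :=
  ∀ u v, IsMissing A u v →
    (mdeg A u = 1 ∧ mdeg A v = 1) ∨ (mdeg A u = 1 ∧ mdeg A v = 2) ∨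
    (mdeg A u = 2 ∧ mdeg A v = 1)

/-- Out-degree of the missing edge `{u,v}` in the dependency digraph `Δ(D)`:
the number of missing edges it loses to. -/
noncomputable def outDegDelta (A : V → V → Prop) (u v : V) : ℕ :=
  ({f : Sym2 V | ∃ x y, f = s(x, y) ∧ IsMissing A x y ∧ Loses A u v x y}).ncard

/-- In-degree of the missing edge `{u,v}` in the dependency digraph `Δ(D)`:
the number of missing edges losing to it. -/
noncomputable def inDegDelta (A : V → V → Prop) (u v : V) : ℕ :=
  ({f : Sym2 V | ∃ x y, f = s(x, y) ∧ IsMissing A x y ∧ Loses A x y u v}).ncard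

/-- `C = a₁b₁c₁, …, a_k b_k c_k` is a double cycle in `Δ(D)`: pairwise vertex-disjoint
missing paths of length 2 (`k ≥ 2`), where each of `{aᵢ,bᵢ}, {bᵢ,cᵢ}` loses to each of
`{aᵢ₊₁,bᵢ₊₁}, {bᵢ₊₁,cᵢ₊₁}` (indices modulo `k`). -/
def IsDoubleCycle (A : V → V → Prop) (k : ℕ) (a b c : ZMod k → V) : Prop :=
  2 ≤ k ∧
  (∀ i, IsMissing A (a i) (b i) ∧ IsMissing A (b i) (c i) ∧ a i ≠ c i) ∧
  (∀ i j, i ≠ j → Disjoint ({a i, b i, c i} : Set V) {a j, b j, c j}) ∧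
  (∀ i, Loses A (a i) (b i) (a (i + 1)) (b (i + 1)) ∧
        Loses A (a i) (b i) (b (i + 1)) (c (i + 1)) ∧
        Loses A (b i) (c i) (a (i + 1)) (b (i + 1)) ∧
        Loses A (b i) (c i) (b (i + 1)) (c (i + 1)))

/-- `K(C)` for a double cycle `C`. -/
def Kset {k : ℕ} (a b c : ZMod k → V) : Set V :=
  {v | ∃ i, v = a i ∨ v = b i ∨ v = c i}

/-- Out-neighborhood in the subdigraph induced on `K`. -/
def outIn (A : V → V → Prop) (K : Set V) (v : V) : Set V := {u | u ∈ K ∧ A v u}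

/-- In-neighborhood in the subdigraph induced on `K`. -/
def inIn (A : V → V → Prop) (K : Set V) (v : V) : Set V := {u | u ∈ K ∧ A u v}

/-- Second out-neighborhood in the subdigraph induced on `K`. -/
def secondOutIn (A : V → V → Prop) (K : Set V) (v : V) : Set V :=
  {u | u ∈ K ∧ u ≠ v ∧ ¬ A v u ∧ ∃ w ∈ K, A v w ∧ A w u}

/-- Second in-neighborhood in the subdigraph induced on `K`. -/
def secondInIn (A : V → V → Prop) (K : Set V) (v : V) : Set V :=
  {u | u ∈ K ∧ u ≠ v ∧ ¬ A u v ∧ ∃ w ∈ K, A u w ∧ A w v}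

section MissingGraph

variable {A : V → V → Prop}

lemma IsMissing.symm {u v : V} (h : IsMissing A u v) : IsMissing A v u :=
  ⟨h.1.symm, h.2.2, h.2.1⟩

lemma mem_of_isMissing_of_mdeg_le {u w : V} {s : Set V} (hs : s ⊆ {w | IsMissing A u w})
    (hle : mdeg A u ≤ s.ncard) (hpos : mdeg A u ≠ 0) (hw : IsMissing A u w) : w ∈ s := by
  rwa [Set.eq_of_subset_of_ncard_le hs hle (Set.finite_of_ncard_ne_zero hpos)]

lemma MissingPaths2.mem_of_isMissing (hP : MissingPaths2 A) {a b c u w : V}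
    (hab : IsMissing A a b) (hbc : IsMissing A b c) (hac : a ≠ c)
    (hu : u ∈ ({a, b, c} : Set V)) (huw : IsMissing A u w) : w ∈ ({a, b, c} : Set V) := by
  have hsub : ({a, c} : Set V) ⊆ {w | IsMissing A b w} := by
    rintro v (rfl | rfl)
    exacts [hab.symm, hbc]
  have hb : mdeg A b = 2 := by
    have hpos : mdeg A b ≠ 0 := by rcases hP a b hab with h | h <;> omega
    have := Set.ncard_le_ncard hsub (Set.finite_of_ncard_ne_zero hpos)
    rw [Set.ncard_pair hac] at this
    rcases hP a b hab with h | h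
    exacts [h.2, by unfold mdeg at h; omega]
  rcases hu with rfl | rfl | rfl
  · have ha : mdeg A u = 1 := by rcases hP u b hab with h | h <;> omega
    have := mem_of_isMissing_of_mdeg_le (s := {b}) (by simpa using hab) (by simp [ha])
      (by omega) huw
    simp_all
  · have := mem_of_isMissing_of_mdeg_le hsub (by rw [Set.ncard_pair hac, hb]) (by omega) huw
    rcases this with rfl | rfl <;> simp
  · have hc : mdeg A u = 1 := by rcases hP b u hbc with h | h <;> omega
    have := mem_of_isMissing_of_mdeg_le (s := {b}) (by simpa using hbc.symm) (by simp [hc])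
      (by omega) huw
    simp_all

end MissingGraph

section Patterns

variable {A : V → V → Prop}

def NoTwoPath (A : V → V → Prop) (u v : V) : Prop := ∀ w, ¬ (A u w ∧ A w v)

lemma noTwoPath_of_not_secondOut {u v : V} (hne : u ≠ v) (huv : ¬ A u v)
    (hs : ¬ SecondOut A u v) : NoTwoPath A u v :=
  fun w hw => hs ⟨hne.symm, huv, w, hw⟩

/-- Positions `0` and `2` of a triple are its ends and `1` its middle; `crossed i j` says that
exactly one of the positions `i`, `j` is a middle. -/
def crossed (i j : Fin 3) : Bool := (i == 1) != (j == 1)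

lemma crossed_comm (i j : Fin 3) : crossed i j = crossed j i := by decide +revert

def RelPattern (R : V → V → Prop) (s : Bool) (X P : Fin 3 → V) : Prop :=
  ∀ i j, crossed i j = s → R (X i) (P j)

lemma relPattern_false_iff {R : V → V → Prop} {x y z p q r : V} :
    RelPattern R false ![x, y, z] ![p, q, r] ↔ R x p ∧ R x r ∧ R z p ∧ R z r ∧ R y q := by
  refine ⟨fun h => ⟨h 0 0 rfl, h 0 2 rfl, h 2 0 rfl, h 2 2 rfl, h 1 1 rfl⟩, ?_⟩
  rintro ⟨hxp, hxr, hzp, hzr, hyq⟩ i j hij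
  fin_cases i <;> fin_cases j <;> simp_all [crossed]

lemma relPattern_true_iff {R : V → V → Prop} {x y z p q r : V} :
    RelPattern R true ![x, y, z] ![p, q, r] ↔ R x q ∧ R z q ∧ R y p ∧ R y r := by
  refine ⟨fun h => ⟨h 0 1 rfl, h 2 1 rfl, h 1 0 rfl, h 1 2 rfl⟩, ?_⟩
  rintro ⟨hxq, hzq, hyp, hyr⟩ i j hij
  fin_cases i <;> fin_cases j <;> simp_all [crossed]

def Joined (A : V → V → Prop) (X P : Fin 3 → V) : Prop := ∀ i j, A (X i) (P j) ∨ A (P j) (X i)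

lemma exists_crossed_of_crossed_eq_xor :
    ∀ (s s' : Bool) (i j : Fin 3), crossed i j = xor s s' →
      ∃ l, crossed l j = s ∧ crossed l i = s' := by
  decide

lemma RelPattern.of_noTwoPath {s s' : Bool} {M T X : Fin 3 → V} (hMT : RelPattern A s M T)
    (hMX : RelPattern (NoTwoPath A) s' M X) (hXT : Joined A X T) :
    RelPattern A (xor s s') X T := by
  intro i j hij
  obtain ⟨l, hlj, hli⟩ := exists_crossed_of_crossed_eq_xor s s' i j hij
  exact (hXT i j).resolve_right fun hTX => hMX l i hli (T j) ⟨hMT l j hlj, hTX⟩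

lemma RelPattern.eq_not_of_oriented (hA : Oriented A) {s s' : Bool} {X P : Fin 3 → V}
    (h : RelPattern A s X P) (h' : RelPattern A s' P X) : s' = !s := by
  by_contra hne
  have hs : s' = s := by cases s <;> cases s' <;> simp_all
  obtain ⟨i, j, hij⟩ : ∃ i j, crossed i j = s := by
    cases s
    exacts [⟨0, 0, rfl⟩, ⟨0, 1, rfl⟩]
  exact hA _ _ (h i j hij) (h' j i (by rw [crossed_comm, hij, hs]))

lemma exists_relPattern_of_loses {p q r x y z : V} (hne : ∀ i j, ![p, q, r] i ≠ ![x, y, z] j)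
    (hadj : Joined A ![x, y, z] ![p, q, r])
    (h₁ : Loses A p q x y) (h₂ : Loses A p q y z) (h₃ : Loses A q r x y)
    (h₄ : Loses A q r y z) :
    ∃ s, RelPattern A s ![x, y, z] ![p, q, r] ∧
      RelPattern (NoTwoPath A) s ![p, q, r] ![x, y, z] := by
  have arc : ∀ i j, ¬ A (![p, q, r] j) (![x, y, z] i) → A (![x, y, z] i) (![p, q, r] j) :=
    fun i j => (hadj i j).resolve_right
  have noPath : ∀ i j, ¬ A (![p, q, r] i) (![x, y, z] j) →
      ¬ SecondOut A (![p, q, r] i) (![x, y, z] j) →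
      NoTwoPath A (![p, q, r] i) (![x, y, z] j) :=
    fun i j => noTwoPath_of_not_secondOut (hne i j)
  rcases h₁ with ⟨-, -, hpy, spy, hqx, sqx⟩ | ⟨-, -, hpx, spx, hqy, sqy⟩
  · obtain ⟨-, -, -, -, hqz, sqz⟩ := h₂.resolve_left fun h => hpy h.1
    obtain ⟨-, -, -, -, hry, sry⟩ := h₃.resolve_left fun h => hqx h.1
    refine ⟨true, relPattern_true_iff.2 ⟨arc 0 1 hqx, arc 2 1 hqz, arc 1 0 hpy, arc 1 2 hry⟩,
      relPattern_true_iff.2 ⟨noPath 0 1 hpy spy, noPath 2 1 hry sry, noPath 1 0 hqx sqx,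
        noPath 1 2 hqz sqz⟩⟩
  · obtain ⟨-, -, hpz, spz, -, -⟩ := h₂.resolve_right fun h => hqy h.2.1
    obtain ⟨-, -, -, -, hrx, srx⟩ := h₃.resolve_right fun h => hqy h.1
    obtain ⟨-, -, -, -, hrz, srz⟩ := h₄.resolve_left fun h => hqy h.1
    refine ⟨false, relPattern_false_iff.2 ⟨arc 0 0 hpx, arc 0 2 hrx, arc 2 0 hpz, arc 2 2 hrz,
      arc 1 1 hqy⟩, relPattern_false_iff.2 ⟨noPath 0 0 hpx spx, noPath 0 2 hpz spz,
        noPath 2 0 hrx srx, noPath 2 2 hrz srz, noPath 1 1 hqy sqy⟩⟩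

lemma ZMod.add_natCast_ne_self {k d : ℕ} (m : ZMod k) (hd : 0 < d) (hdk : d < k) :
    m + d ≠ m := by
  rw [Ne, add_eq_left, ZMod.natCast_eq_zero_iff]
  exact Nat.not_dvd_of_pos_of_lt hd hdk

end Patterns

section DoubleCycle

variable {A : V → V → Prop} {k : ℕ} {a b c : ZMod k → V}

def tri (a b c : ZMod k → V) (m : ZMod k) : Fin 3 → V := ![a m, b m, c m]

lemma tri_mem (m : ZMod k) (x : Fin 3) : tri a b c m x ∈ ({a m, b m, c m} : Set V) := by
  fin_cases x <;> simp [tri]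

lemma IsDoubleCycle.tri_ne (hC : IsDoubleCycle A k a b c) {m n : ZMod k} (hmn : m ≠ n)
    (x y : Fin 3) : tri a b c m x ≠ tri a b c n y := fun he =>
  Set.disjoint_left.1 (hC.2.2.1 m n hmn) (tri_mem m x) (he ▸ tri_mem n y)

lemma IsDoubleCycle.joined (hP : MissingPaths2 A) (hC : IsDoubleCycle A k a b c)
    {m n : ZMod k} (hmn : m ≠ n) : Joined A (tri a b c m) (tri a b c n) := by
  intro x y
  obtain ⟨hab, hbc, hac⟩ := hC.2.1 m
  by_contra h
  obtain ⟨hxy, hyx⟩ := not_or.1 h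
  exact Set.disjoint_left.1 (hC.2.2.1 m n hmn)
    (hP.mem_of_isMissing hab hbc hac (tri_mem m x) ⟨hC.tri_ne hmn x y, hxy, hyx⟩) (tri_mem n y)

lemma IsDoubleCycle.exists_relPattern_succ (hP : MissingPaths2 A)
    (hC : IsDoubleCycle A k a b c) (m : ZMod k) :
    ∃ s, RelPattern A s (tri a b c (m + 1)) (tri a b c m) ∧
      RelPattern (NoTwoPath A) s (tri a b c m) (tri a b c (m + 1)) := by
  have hm : m + 1 ≠ m := by
    simpa using ZMod.add_natCast_ne_self m one_pos hC.1
  obtain ⟨h₁, h₂, h₃, h₄⟩ := hC.2.2.2 m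
  exact exists_relPattern_of_loses (hC.tri_ne hm.symm) (hC.joined hP hm) h₁ h₂ h₃ h₄

lemma IsDoubleCycle.exists_relPattern_add (hP : MissingPaths2 A)
    (hC : IsDoubleCycle A k a b c) (t : ZMod k) {d : ℕ} (hd : 0 < d) (hdk : d < k) :
    ∃ s, RelPattern A s (tri a b c (t + d)) (tri a b c t) := by
  induction d, hd using Nat.le_induction with
  | base => simpa using (hC.exists_relPattern_succ hP t).imp fun _ h => h.1
  | succ d hd ih =>
    obtain ⟨s, hs⟩ := ih (by omega)
    obtain ⟨s', -, hs'⟩ := hC.exists_relPattern_succ hP (t + d)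
    have hne : t + d + 1 ≠ t := by
      simpa [add_assoc] using ZMod.add_natCast_ne_self t (d := d + 1) (by omega) hdk
    refine ⟨xor s s', ?_⟩
    rw [Nat.cast_succ, ← add_assoc]
    exact hs.of_noTwoPath hs' (hC.joined hP hne)

lemma IsDoubleCycle.exists_relPattern (hA : Oriented A) (hP : MissingPaths2 A)
    (hC : IsDoubleCycle A k a b c) {t i : ZMod k} (hit : i ≠ t) :
    ∃ s, RelPattern A s (tri a b c i) (tri a b c t) ∧
      RelPattern A (!s) (tri a b c t) (tri a b c i) := by
  have : NeZero k := ⟨by have := hC.1; omega⟩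
  have key : ∀ {m n : ZMod k}, m ≠ n → ∃ s, RelPattern A s (tri a b c m) (tri a b c n) := by
    intro m n hmn
    have := hC.exists_relPattern_add hP n (ZMod.val_pos.2 (sub_ne_zero.2 hmn)) (ZMod.val_lt _)
    rwa [ZMod.natCast_zmod_val, add_sub_cancel] at this
  obtain ⟨s, hs⟩ := key hit
  obtain ⟨s', hs'⟩ := key hit.symm
  exact ⟨s, hs, hs.eq_not_of_oriented hA hs' ▸ hs'⟩

end DoubleCycle

theorem stmt9_general {V : Type*} (A : V → V → Prop) (hA : Oriented A)
    (hP : MissingPaths2 A) (k : ℕ) (a b c : ZMod k → V)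
    (hC : IsDoubleCycle A k a b c) (K : Set V) (hK : K = Kset a b c) :
    ∀ t i, i ≠ t →
      (((a i ∈ outIn A K (a t) ∪ outIn A K (c t) ∪ inIn A K (b t)) ↔
        (c i ∈ outIn A K (a t) ∪ outIn A K (c t) ∪ inIn A K (b t))) ∧
       ((c i ∈ outIn A K (a t) ∪ outIn A K (c t) ∪ inIn A K (b t)) ↔
        (({a i, c i} : Set V) ⊆ outIn A K (a t) ∩ outIn A K (c t) ∩ inIn A K (b t))) ∧
       ((({a i, c i} : Set V) ⊆ outIn A K (a t) ∩ outIn A K (c t) ∩ inIn A K (b t)) ↔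
        (b i ∈ inIn A K (a t) ∪ inIn A K (c t) ∪ outIn A K (b t))) ∧
       ((b i ∈ inIn A K (a t) ∪ inIn A K (c t) ∪ outIn A K (b t)) ↔
        (b i ∈ inIn A K (a t) ∩ inIn A K (c t) ∩ outIn A K (b t)))) ∧
      (((a i ∈ inIn A K (a t) ∪ inIn A K (c t) ∪ outIn A K (b t)) ↔
        (c i ∈ inIn A K (a t) ∪ inIn A K (c t) ∪ outIn A K (b t))) ∧
       ((c i ∈ inIn A K (a t) ∪ inIn A K (c t) ∪ outIn A K (b t)) ↔
        (({a i, c i} : Set V) ⊆ inIn A K (a t) ∩ inIn A K (c t) ∩ outIn A K (b t))) ∧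
       ((({a i, c i} : Set V) ⊆ inIn A K (a t) ∩ inIn A K (c t) ∩ outIn A K (b t)) ↔
        (b i ∈ outIn A K (a t) ∪ outIn A K (c t) ∪ inIn A K (b t))) ∧
       ((b i ∈ outIn A K (a t) ∪ outIn A K (c t) ∪ inIn A K (b t)) ↔
        (b i ∈ outIn A K (a t) ∩ outIn A K (c t) ∩ inIn A K (b t)))) := by
  subst hK
  intro t i hit
  obtain ⟨s, hit, hti⟩ := hC.exists_relPattern hA hP hit
  have hKa : a i ∈ Kset a b c := ⟨i, Or.inl rfl⟩
  have hKb : b i ∈ Kset a b c := ⟨i, Or.inr (Or.inl rfl)⟩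
  have hKc : c i ∈ Kset a b c := ⟨i, Or.inr (Or.inr rfl)⟩
  simp only [outIn, inIn, Set.mem_union, Set.mem_inter_iff, Set.mem_ofPred_eq,
    Set.insert_subset_iff, Set.singleton_subset_iff, hKa, hKb, hKc, true_and]
  cases s <;> simp only [tri, relPattern_false_iff, relPattern_true_iff, Bool.not_false,
    Bool.not_true] at hit hti <;> grind [Oriented]

/-- Corollary 4.10. -/
theorem stmt9 {V : Type*} [Fintype V] (A : V → V → Prop) (hA : Oriented A)
    (hP : MissingPaths2 A) (k : ℕ) (a b c : ZMod k → V)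
    (hC : IsDoubleCycle A k a b c) (K : Set V) (hK : K = Kset a b c) :
    ∀ t i, i ≠ t →
      (((a i ∈ outIn A K (a t) ∪ outIn A K (c t) ∪ inIn A K (b t)) ↔
        (c i ∈ outIn A K (a t) ∪ outIn A K (c t) ∪ inIn A K (b t))) ∧
       ((c i ∈ outIn A K (a t) ∪ outIn A K (c t) ∪ inIn A K (b t)) ↔
        (({a i, c i} : Set V) ⊆ outIn A K (a t) ∩ outIn A K (c t) ∩ inIn A K (b t))) ∧
       ((({a i, c i} : Set V) ⊆ outIn A K (a t) ∩ outIn A K (c t) ∩ inIn A K (b t)) ↔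
        (b i ∈ inIn A K (a t) ∪ inIn A K (c t) ∪ outIn A K (b t))) ∧
       ((b i ∈ inIn A K (a t) ∪ inIn A K (c t) ∪ outIn A K (b t)) ↔
        (b i ∈ inIn A K (a t) ∩ inIn A K (c t) ∩ outIn A K (b t)))) ∧
      (((a i ∈ inIn A K (a t) ∪ inIn A K (c t) ∪ outIn A K (b t)) ↔
        (c i ∈ inIn A K (a t) ∪ inIn A K (c t) ∪ outIn A K (b t))) ∧
       ((c i ∈ inIn A K (a t) ∪ inIn A K (c t) ∪ outIn A K (b t)) ↔
        (({a i, c i} : Set V) ⊆ inIn A K (a t) ∩ inIn A K (c t) ∩ outIn A K (b t))) ∧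
       ((({a i, c i} : Set V) ⊆ inIn A K (a t) ∩ inIn A K (c t) ∩ outIn A K (b t)) ↔
        (b i ∈ outIn A K (a t) ∪ outIn A K (c t) ∪ inIn A K (b t))) ∧
       ((b i ∈ outIn A K (a t) ∪ outIn A K (c t) ∪ inIn A K (b t)) ↔
        (b i ∈ outIn A K (a t) ∩ outIn A K (c t) ∩ inIn A K (b t)))) :=
  stmt9_general A hA hP k a b c hC K hK

end SSNC
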